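/- Let (F,G) and (F₁,G₁) be generating pairs on an open set Ω ⊆ 𝔻 such that (F₁,G₁) is a successor of (F,G), i.e. a_(F₁,G₁) = a_(F,G) and b_(F₁,G₁) = −B_(F,G) on Ω. Let w : Ω → 𝔻 be continuously differentiable and satisfy the hyperbolic Vekua equation w_z̄ = a_(F,G)w + b_(F,G)w̄ on Ω, and suppose its (F,G)-derivative W = w_z − A_(F,G)w − B_(F,G)w̄ is continuously differentiable on Ω. Then W satisfies W_z̄ = a_(F₁,G₁)W + b_(F₁,G₁)W̄ on Ω, i.e. W is hyperbolic (F₁,G₁)-pseudoanalytic. -/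

import Mathlib

noncomputable section

open Filter Topology MeasureTheory

/-- Hyperbolic (duplex) numbers 𝔻, modeled as pairs `(Re z, Im z)` with `j ^ 2 = 1`. -/
abbrev Hyp : Type := ℝ × ℝ

/-- Real part of a hyperbolic number. -/
def hre (a : Hyp) : ℝ := a.1

/-- Imaginary part of a hyperbolic number. -/
def him (a : Hyp) : ℝ := a.2

/-- The hyperbolic imaginary unit `j`. -/
def hj : Hyp := (0, 1)

/-- Hyperbolic multiplication: `(x+tj)(x'+t'j) = (xx'+tt') + (xt'+tx')j`. -/
def hmul (a b : Hyp) : Hyp := (a.1 * b.1 + a.2 * b.2, a.1 * b.2 + a.2 * b.1)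

/-- Hyperbolic conjugation: `conj (x+tj) = x - tj`. -/
def hconj (a : Hyp) : Hyp := (a.1, -a.2)

/-- Invertibility of a hyperbolic number: `x² ≠ t²`. -/
def IsInv (a : Hyp) : Prop := a.1 ^ 2 ≠ a.2 ^ 2

/-- Hyperbolic inverse `z⁻¹ = z̄ / |z|²` with `|z|² = x² - t²`. -/
def hinv (a : Hyp) : Hyp := (a.1 / (a.1 ^ 2 - a.2 ^ 2), -a.2 / (a.1 ^ 2 - a.2 ^ 2))

/-- Hyperbolic division. -/
def hdiv (a b : Hyp) : Hyp := hmul a (hinv b)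

/-- Partial derivative in the first (`x`) variable. -/
def pdx (g : Hyp → ℝ) (p : Hyp) : ℝ := deriv (fun s => g (s, p.2)) p.1

/-- Partial derivative in the second (`t`) variable. -/
def pdt (g : Hyp → ℝ) (p : Hyp) : ℝ := deriv (fun s => g (p.1, s)) p.2

/-- The wave operator `□g = g_xx - g_tt`. -/
def waveOp (g : Hyp → ℝ) (p : Hyp) : ℝ := pdx (pdx g) p - pdt (pdt g) p

/-- `w_z = ½(∂_x + j ∂_t) w = ½((u_x+v_t) + (v_x+u_t)j)` for a 𝔻-valued `w = u + jv`. -/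
def dz (w : Hyp → Hyp) (p : Hyp) : Hyp :=
  ((pdx (fun q => (w q).1) p + pdt (fun q => (w q).2) p) / 2,
   (pdx (fun q => (w q).2) p + pdt (fun q => (w q).1) p) / 2)

/-- `w_z̄ = ½(∂_x - j ∂_t) w = ½((u_x-v_t) + (v_x-u_t)j)` for a 𝔻-valued `w = u + jv`. -/
def dzbar (w : Hyp → Hyp) (p : Hyp) : Hyp :=
  ((pdx (fun q => (w q).1) p - pdt (fun q => (w q).2) p) / 2,
   (pdx (fun q => (w q).2) p - pdt (fun q => (w q).1) p) / 2)

/-- `f_z = ½(f_x + j f_t)` for a real-valued `f`. -/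
def rz (f : Hyp → ℝ) (p : Hyp) : Hyp := (pdx f p / 2, pdt f p / 2)

/-- `f_z̄ = ½(f_x - j f_t)` for a real-valued `f`. -/
def rzbar (f : Hyp → ℝ) (p : Hyp) : Hyp := (pdx f p / 2, -(pdt f p) / 2)

/-- 𝔻-differentiability at `z₀`: the difference quotient `(f z - f z₀)·(z - z₀)⁻¹`
tends to `d` as `z → z₀` through points with `z - z₀` invertible. -/
def HasHDerivAt (f : Hyp → Hyp) (d : Hyp) (z₀ : Hyp) : Prop :=
  Filter.Tendsto (fun z => hmul (f z - f z₀) (hinv (z - z₀)))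
    (nhdsWithin z₀ {z | IsInv (z - z₀)}) (nhds d)

/-- `F Ḡ - F̄ G`. -/
def pairDenom (F G : Hyp → Hyp) (z : Hyp) : Hyp :=
  hmul (F z) (hconj (G z)) - hmul (hconj (F z)) (G z)

/-- Characteristic coefficient `a_(F,G) = -(F̄ G_z̄ - F_z̄ Ḡ)/(F Ḡ - F̄ G)`. -/
def aFG (F G : Hyp → Hyp) (z : Hyp) : Hyp :=
  - hdiv (hmul (hconj (F z)) (dzbar G z) - hmul (dzbar F z) (hconj (G z))) (pairDenom F G z)

/-- Characteristic coefficient `b_(F,G) = (F G_z̄ - F_z̄ G)/(F Ḡ - F̄ G)`. -/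
def bFG (F G : Hyp → Hyp) (z : Hyp) : Hyp :=
  hdiv (hmul (F z) (dzbar G z) - hmul (dzbar F z) (G z)) (pairDenom F G z)

/-- Characteristic coefficient `A_(F,G) = -(F̄ G_z - F_z Ḡ)/(F Ḡ - F̄ G)`. -/
def AFG (F G : Hyp → Hyp) (z : Hyp) : Hyp :=
  - hdiv (hmul (hconj (F z)) (dz G z) - hmul (dz F z) (hconj (G z))) (pairDenom F G z)

/-- Characteristic coefficient `B_(F,G) = (F G_z - F_z G)/(F Ḡ - F̄ G)`. -/
def BFG (F G : Hyp → Hyp) (z : Hyp) : Hyp :=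
  hdiv (hmul (F z) (dz G z) - hmul (dz F z) (G z)) (pairDenom F G z)

/-- A generating pair on `Ω`: twice continuously differentiable `F, G` with `Im(F̄G) ≠ 0`. -/
def IsGenPair (F G : Hyp → Hyp) (Ω : Set Hyp) : Prop :=
  ContDiffOn ℝ 2 F Ω ∧ ContDiffOn ℝ 2 G Ω ∧ ∀ z ∈ Ω, him (hmul (hconj (F z)) (G z)) ≠ 0

/-- The idempotent `e₁ = (1+j)/2`. -/
def e1 : Hyp := (1/2, 1/2)

/-- The idempotent `e₂ = (1-j)/2`. -/
def e2 : Hyp := (1/2, -1/2)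

/-- Contour integral `∮_{∂R} h dz` over the counterclockwise boundary of the rectangle
`[x₁,x₂] × [t₁,t₂]`, with hyperbolic multiplication (`dz = dx` on horizontal sides,
`dz = j dt` on vertical sides). -/
def rectContourInt (h : Hyp → Hyp) (x₁ x₂ t₁ t₂ : ℝ) : Hyp :=
  ((∫ x in x₁..x₂, h (x, t₁)) - ∫ x in x₁..x₂, h (x, t₂)) +
    hmul hj ((∫ t in t₁..t₂, h (x₂, t)) - ∫ t in t₁..t₂, h (x₁, t))

/-- Integral `∫_{[z₀,z]} h dζ` along the straight segment from `z₀` to `z`,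
with hyperbolic multiplication. -/
def segInt (h : Hyp → Hyp) (z₀ z : Hyp) : Hyp :=
  ∫ s in (0:ℝ)..1, hmul (h (z₀ + s • (z - z₀))) (z - z₀)

/-- Natural powers in 𝔻. -/
def hpow (a : Hyp) : ℕ → Hyp
  | 0 => (1, 0)
  | n + 1 => hmul a (hpow a n)

/-- Integer powers in 𝔻 (for invertible base). -/
def hzpow (a : Hyp) : ℤ → Hyp
  | Int.ofNat n => hpow a n
  | Int.negSucc n => hinv (hpow a (n + 1))

/-!
Write `a, b, A, B` for the characteristic coefficients of `(F, G)`. By Cramer's rule `F` and `G`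
solve both `f_z̄ = a f + b f̄` and `f_z = A f + B f̄`, and equating `(f_z)_z̄ = (f_z̄)_z` gives
`α F + β F̄ = 0 = α G + β Ḡ`, where `α = a_z - A_z̄ + b b̄ - B B̄` and `β` is a similar expression.
Since `F Ḡ - F̄ G` is invertible, `α = β = 0`. For a solution `w` of `w_z̄ = a w + b w̄` the same
computation gives `W_z̄ = a W - B W̄ + α w + β w̄` for `W = w_z - A w - B w̄`, which is the claim
because `a_(F₁,G₁) = a` and `b_(F₁,G₁) = -B`.
-/

lemma isInv_pairDenom {u v : Hyp} (hne : him (hmul (hconj u) v) ≠ 0) :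
    IsInv (hmul u (hconj v) - hmul (hconj u) v) := by
  simp only [hmul, hconj, him, IsInv, Prod.fst_sub, Prod.snd_sub] at *
  intro h
  exact hne (pow_eq_zero_iff two_ne_zero |>.mp (by linear_combination (-1 / 4 : ℝ) * h))

lemma hmul_hmul_hinv (X : Hyp) {d : Hyp} (hd : IsInv d) : hmul (hmul X d) (hinv d) = X := by
  have hd' : d.1 ^ 2 - d.2 ^ 2 ≠ 0 := sub_ne_zero.mpr hd
  ext <;> simp only [hmul, hinv] <;> field_simp <;> ring

lemma cramer_fst {u v : Hyp} (X Y : Hyp) (hne : him (hmul (hconj u) v) ≠ 0) :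
    hmul (-hdiv (hmul (hconj u) Y - hmul X (hconj v)) (hmul u (hconj v) - hmul (hconj u) v)) u
      + hmul (hdiv (hmul u Y - hmul X v) (hmul u (hconj v) - hmul (hconj u) v)) (hconj u)
      = X := by
  refine .trans ?_ (hmul_hmul_hinv X (isInv_pairDenom hne))
  ext <;> simp only [hdiv, hmul, hconj, Prod.fst_add, Prod.snd_add, Prod.fst_sub, Prod.snd_sub,
    Prod.fst_neg, Prod.snd_neg] <;> ring

lemma cramer_snd {u v : Hyp} (X Y : Hyp) (hne : him (hmul (hconj u) v) ≠ 0) :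
    hmul (-hdiv (hmul (hconj u) Y - hmul X (hconj v)) (hmul u (hconj v) - hmul (hconj u) v)) v
      + hmul (hdiv (hmul u Y - hmul X v) (hmul u (hconj v) - hmul (hconj u) v)) (hconj v)
      = Y := by
  refine .trans ?_ (hmul_hmul_hinv Y (isInv_pairDenom hne))
  ext <;> simp only [hdiv, hmul, hconj, Prod.fst_add, Prod.snd_add, Prod.fst_sub, Prod.snd_sub,
    Prod.fst_neg, Prod.snd_neg] <;> ring

lemma eq_zero_of_hmul_eq_zero {α d : Hyp} (hd : IsInv d) (h : hmul α d = 0) : α = 0 := by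
  rw [← hmul_hmul_hinv α hd, h]
  simp [hmul]

lemma eq_zero_of_hmul_add_hmul_hconj_eq_zero {α β u v : Hyp}
    (hne : him (hmul (hconj u) v) ≠ 0)
    (hu : hmul α u + hmul β (hconj u) = 0) (hv : hmul α v + hmul β (hconj v) = 0) :
    α = 0 ∧ β = 0 := by
  have hd := isInv_pairDenom hne
  constructor <;> refine eq_zero_of_hmul_eq_zero hd ?_
  · calc hmul α (hmul u (hconj v) - hmul (hconj u) v)
        = hmul (hmul α u + hmul β (hconj u)) (hconj v)
          - hmul (hmul α v + hmul β (hconj v)) (hconj u) := by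
          ext <;> simp only [hmul, hconj, Prod.fst_sub, Prod.snd_sub, Prod.fst_add, Prod.snd_add]
            <;> ring
      _ = 0 := by rw [hu, hv]; simp [hmul]
  · calc hmul β (hmul u (hconj v) - hmul (hconj u) v)
        = hmul u (hmul α v + hmul β (hconj v)) - hmul v (hmul α u + hmul β (hconj u)) := by
          ext <;> simp only [hmul, hconj, Prod.fst_sub, Prod.snd_sub, Prod.fst_add, Prod.snd_add]
            <;> ring
      _ = 0 := by rw [hu, hv]; simp [hmul]

section PartialDerivatives

variable {f g : Hyp → ℝ} {p : Hyp}

lemma HasFDerivAt.pdx_eq {L : Hyp →L[ℝ] ℝ} (h : HasFDerivAt g L p) : pdx g p = L (1, 0) :=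
  (h.comp_hasDerivAt p.1 ((hasDerivAt_id p.1).prodMk (hasDerivAt_const p.1 p.2))).deriv

lemma HasFDerivAt.pdt_eq {L : Hyp →L[ℝ] ℝ} (h : HasFDerivAt g L p) : pdt g p = L (0, 1) :=
  (h.comp_hasDerivAt p.2 ((hasDerivAt_const p.2 p.1).prodMk (hasDerivAt_id p.2))).deriv

lemma hasDerivAt_pdx (h : DifferentiableAt ℝ g p) :
    HasDerivAt (fun s => g (s, p.2)) (pdx g p) p.1 :=
  (h.comp p.1 (differentiableAt_id.prodMk (differentiableAt_const _))).hasDerivAt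

lemma hasDerivAt_pdt (h : DifferentiableAt ℝ g p) :
    HasDerivAt (fun s => g (p.1, s)) (pdt g p) p.2 :=
  (h.comp p.2 ((differentiableAt_const _).prodMk differentiableAt_id)).hasDerivAt

lemma pdx_congr (h : f =ᶠ[𝓝 p] g) : pdx f p = pdx g p :=
  EventuallyEq.deriv_eq (((continuous_id.prodMk continuous_const).tendsto' p.1 p rfl).eventually h)

lemma pdt_congr (h : f =ᶠ[𝓝 p] g) : pdt f p = pdt g p :=
  EventuallyEq.deriv_eq (((continuous_const.prodMk continuous_id).tendsto' p.2 p rfl).eventually h)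

lemma pdx_add (hf : DifferentiableAt ℝ f p) (hg : DifferentiableAt ℝ g p) :
    pdx (fun q => f q + g q) p = pdx f p + pdx g p :=
  ((hasDerivAt_pdx hf).add (hasDerivAt_pdx hg)).deriv

lemma pdt_add (hf : DifferentiableAt ℝ f p) (hg : DifferentiableAt ℝ g p) :
    pdt (fun q => f q + g q) p = pdt f p + pdt g p :=
  ((hasDerivAt_pdt hf).add (hasDerivAt_pdt hg)).deriv

lemma pdx_sub (hf : DifferentiableAt ℝ f p) (hg : DifferentiableAt ℝ g p) :
    pdx (fun q => f q - g q) p = pdx f p - pdx g p :=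
  ((hasDerivAt_pdx hf).sub (hasDerivAt_pdx hg)).deriv

lemma pdt_sub (hf : DifferentiableAt ℝ f p) (hg : DifferentiableAt ℝ g p) :
    pdt (fun q => f q - g q) p = pdt f p - pdt g p :=
  ((hasDerivAt_pdt hf).sub (hasDerivAt_pdt hg)).deriv

lemma pdx_mul (hf : DifferentiableAt ℝ f p) (hg : DifferentiableAt ℝ g p) :
    pdx (fun q => f q * g q) p = pdx f p * g p + f p * pdx g p :=
  ((hasDerivAt_pdx hf).mul (hasDerivAt_pdx hg)).deriv

lemma pdt_mul (hf : DifferentiableAt ℝ f p) (hg : DifferentiableAt ℝ g p) :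
    pdt (fun q => f q * g q) p = pdt f p * g p + f p * pdt g p :=
  ((hasDerivAt_pdt hf).mul (hasDerivAt_pdt hg)).deriv

lemma pdx_neg : pdx (fun q => -f q) p = -pdx f p := deriv.neg

lemma pdt_neg : pdt (fun q => -f q) p = -pdt f p := deriv.neg

lemma pdx_div_const (c : ℝ) : pdx (fun q => f q / c) p = pdx f p / c := deriv_div_const c

lemma pdt_div_const (c : ℝ) : pdt (fun q => f q / c) p = pdt f p / c := deriv_div_const c

lemma pdx_pdt_comm (hf : ∀ᶠ q in 𝓝 p, DifferentiableAt ℝ f q)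
    (hx : DifferentiableAt ℝ (pdx f) p) (ht : DifferentiableAt ℝ (pdt f) p) :
    pdx (pdt f) p = pdt (pdx f) p := by
  have hfderiv : fderiv ℝ f =ᶠ[𝓝 p] fun q => pdx f q • ContinuousLinearMap.fst ℝ ℝ ℝ
      + pdt f q • ContinuousLinearMap.snd ℝ ℝ ℝ := by
    filter_upwards [hf] with q hq
    ext <;> simp [hq.hasFDerivAt.pdx_eq, hq.hasFDerivAt.pdt_eq]
  have hf' : DifferentiableAt ℝ (fderiv ℝ f) p :=
    hfderiv.differentiableAt_iff.mpr ((hx.smul_const _).add (ht.smul_const _))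
  have happly (v : Hyp) : HasFDerivAt (fun q => fderiv ℝ f q v)
      ((fderiv ℝ (fderiv ℝ f) p).flip v) p := by
    simpa using hf'.hasFDerivAt.clm_apply (hasFDerivAt_const v p)
  rw [pdx_congr (hf.mono fun q hq => hq.hasFDerivAt.pdt_eq),
    pdt_congr (hf.mono fun q hq => hq.hasFDerivAt.pdx_eq), (happly _).pdx_eq, (happly _).pdt_eq]
  exact second_derivative_symmetric_of_eventually (hf.mono fun q hq => hq.hasFDerivAt)
    hf'.hasFDerivAt _ _

lemma ContDiffOn.differentiableAt_pdx {s : Set Hyp} (hs : IsOpen s) (hp : p ∈ s)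
    (h : ContDiffOn ℝ 2 g s) : DifferentiableAt ℝ (pdx g) p := by
  have hev : pdx g =ᶠ[𝓝 p] fun q => fderiv ℝ g q (1, 0) := by
    filter_upwards [hs.mem_nhds hp] with q hq
    exact ((h.contDiffAt (hs.mem_nhds hq)).differentiableAt two_ne_zero).hasFDerivAt.pdx_eq
  have hfderiv : DifferentiableAt ℝ (fderiv ℝ g) p :=
    ((h.contDiffAt (hs.mem_nhds hp)).fderiv_right (by norm_num)).differentiableAt one_ne_zero
  exact hev.differentiableAt_iff.mpr (hfderiv.clm_apply (differentiableAt_const _))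

lemma ContDiffOn.differentiableAt_pdt {s : Set Hyp} (hs : IsOpen s) (hp : p ∈ s)
    (h : ContDiffOn ℝ 2 g s) : DifferentiableAt ℝ (pdt g) p := by
  have hev : pdt g =ᶠ[𝓝 p] fun q => fderiv ℝ g q (0, 1) := by
    filter_upwards [hs.mem_nhds hp] with q hq
    exact ((h.contDiffAt (hs.mem_nhds hq)).differentiableAt two_ne_zero).hasFDerivAt.pdt_eq
  have hfderiv : DifferentiableAt ℝ (fderiv ℝ g) p :=
    ((h.contDiffAt (hs.mem_nhds hp)).fderiv_right (by norm_num)).differentiableAt one_ne_zero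
  exact hev.differentiableAt_iff.mpr (hfderiv.clm_apply (differentiableAt_const _))

end PartialDerivatives

section HypCalculus

variable {f g : Hyp → Hyp} {p : Hyp}

lemma DifferentiableAt.hmul (hf : DifferentiableAt ℝ f p) (hg : DifferentiableAt ℝ g p) :
    DifferentiableAt ℝ (fun q => hmul (f q) (g q)) p :=
  ((hf.fst.fun_mul hg.fst).add (hf.snd.fun_mul hg.snd)).prodMk
    ((hf.fst.fun_mul hg.snd).add (hf.snd.fun_mul hg.fst))

lemma DifferentiableAt.hconj (hf : DifferentiableAt ℝ f p) :
    DifferentiableAt ℝ (fun q => hconj (f q)) p :=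
  hf.fst.prodMk hf.snd.neg

lemma DifferentiableAt.hinv (hf : DifferentiableAt ℝ f p) (hp : IsInv (f p)) :
    DifferentiableAt ℝ (fun q => hinv (f q)) p := by
  have hden : DifferentiableAt ℝ (fun q => (f q).1 ^ 2 - (f q).2 ^ 2) p :=
    (hf.fst.pow 2).sub (hf.snd.pow 2)
  have hne : (fun q => (f q).1 ^ 2 - (f q).2 ^ 2) p ≠ 0 := sub_ne_zero.mpr hp
  simp only [_root_.hinv, div_eq_mul_inv]
  exact (hf.fst.mul (hden.inv hne)).prodMk (hf.snd.neg.mul (hden.inv hne))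

lemma dz_congr (h : f =ᶠ[𝓝 p] g) : dz f p = dz g p := by
  have h1 : (fun q => (f q).1) =ᶠ[𝓝 p] fun q => (g q).1 := h.fun_comp Prod.fst
  have h2 : (fun q => (f q).2) =ᶠ[𝓝 p] fun q => (g q).2 := h.fun_comp Prod.snd
  simp only [dz, pdx_congr h1, pdx_congr h2, pdt_congr h1, pdt_congr h2]

lemma dzbar_congr (h : f =ᶠ[𝓝 p] g) : dzbar f p = dzbar g p := by
  have h1 : (fun q => (f q).1) =ᶠ[𝓝 p] fun q => (g q).1 := h.fun_comp Prod.fst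
  have h2 : (fun q => (f q).2) =ᶠ[𝓝 p] fun q => (g q).2 := h.fun_comp Prod.snd
  simp only [dzbar, pdx_congr h1, pdx_congr h2, pdt_congr h1, pdt_congr h2]

lemma dz_add (hf : DifferentiableAt ℝ f p) (hg : DifferentiableAt ℝ g p) :
    dz (fun q => f q + g q) p = dz f p + dz g p := by
  simp only [dz, Prod.fst_add, Prod.snd_add, pdx_add hf.fst hg.fst, pdx_add hf.snd hg.snd,
    pdt_add hf.fst hg.fst, pdt_add hf.snd hg.snd, Prod.mk_add_mk]
  congr 1 <;> ring

lemma dzbar_sub (hf : DifferentiableAt ℝ f p) (hg : DifferentiableAt ℝ g p) :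
    dzbar (fun q => f q - g q) p = dzbar f p - dzbar g p := by
  simp only [dzbar, Prod.fst_sub, Prod.snd_sub, pdx_sub hf.fst hg.fst, pdx_sub hf.snd hg.snd,
    pdt_sub hf.fst hg.fst, pdt_sub hf.snd hg.snd, Prod.mk_sub_mk]
  congr 1 <;> ring

lemma dz_hconj : dz (fun q => hconj (f q)) p = hconj (dzbar f p) := by
  simp only [dz, dzbar, hconj, pdx_neg, pdt_neg]
  congr 1; ring

lemma dzbar_hconj : dzbar (fun q => hconj (f q)) p = hconj (dz f p) := by
  simp only [dz, dzbar, hconj, pdx_neg, pdt_neg]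
  congr 1 <;> ring

lemma dz_hmul (hf : DifferentiableAt ℝ f p) (hg : DifferentiableAt ℝ g p) :
    dz (fun q => hmul (f q) (g q)) p = hmul (dz f p) (g p) + hmul (f p) (dz g p) := by
  simp only [dz, hmul, pdx_add (hf.fst.fun_mul hg.fst) (hf.snd.fun_mul hg.snd),
    pdx_add (hf.fst.fun_mul hg.snd) (hf.snd.fun_mul hg.fst),
    pdt_add (hf.fst.fun_mul hg.fst) (hf.snd.fun_mul hg.snd),
    pdt_add (hf.fst.fun_mul hg.snd) (hf.snd.fun_mul hg.fst),
    pdx_mul hf.fst hg.fst, pdx_mul hf.snd hg.snd, pdx_mul hf.fst hg.snd,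
    pdx_mul hf.snd hg.fst, pdt_mul hf.fst hg.fst, pdt_mul hf.snd hg.snd,
    pdt_mul hf.fst hg.snd, pdt_mul hf.snd hg.fst, Prod.mk_add_mk]
  congr 1 <;> ring

lemma dzbar_hmul (hf : DifferentiableAt ℝ f p) (hg : DifferentiableAt ℝ g p) :
    dzbar (fun q => hmul (f q) (g q)) p = hmul (dzbar f p) (g p) + hmul (f p) (dzbar g p) := by
  simp only [dzbar, hmul, pdx_add (hf.fst.fun_mul hg.fst) (hf.snd.fun_mul hg.snd),
    pdx_add (hf.fst.fun_mul hg.snd) (hf.snd.fun_mul hg.fst),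
    pdt_add (hf.fst.fun_mul hg.fst) (hf.snd.fun_mul hg.snd),
    pdt_add (hf.fst.fun_mul hg.snd) (hf.snd.fun_mul hg.fst),
    pdx_mul hf.fst hg.fst, pdx_mul hf.snd hg.snd, pdx_mul hf.fst hg.snd,
    pdx_mul hf.snd hg.fst, pdt_mul hf.fst hg.fst, pdt_mul hf.snd hg.snd,
    pdt_mul hf.fst hg.snd, pdt_mul hf.snd hg.fst, Prod.mk_add_mk]
  congr 1 <;> ring

lemma dzbar_dz_comm (hf : ∀ᶠ q in 𝓝 p, DifferentiableAt ℝ f q)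
    (hdz : DifferentiableAt ℝ (dz f) p) (hdzbar : DifferentiableAt ℝ (dzbar f) p) :
    dzbar (dz f) p = dz (dzbar f) p := by
  have hx1 : pdx (fun q => (f q).1) = fun q => (dz f q).1 + (dzbar f q).1 := by
    funext q; simp only [dz, dzbar]; ring
  have ht1 : pdt (fun q => (f q).1) = fun q => (dz f q).2 - (dzbar f q).2 := by
    funext q; simp only [dz, dzbar]; ring
  have hx2 : pdx (fun q => (f q).2) = fun q => (dz f q).2 + (dzbar f q).2 := by
    funext q; simp only [dz, dzbar]; ring
  have ht2 : pdt (fun q => (f q).2) = fun q => (dz f q).1 - (dzbar f q).1 := by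
    funext q; simp only [dz, dzbar]; ring
  have dx1 : DifferentiableAt ℝ (pdx fun q => (f q).1) p := hx1 ▸ hdz.fst.add hdzbar.fst
  have dt1 : DifferentiableAt ℝ (pdt fun q => (f q).1) p := ht1 ▸ hdz.snd.sub hdzbar.snd
  have dx2 : DifferentiableAt ℝ (pdx fun q => (f q).2) p := hx2 ▸ hdz.snd.add hdzbar.snd
  have dt2 : DifferentiableAt ℝ (pdt fun q => (f q).2) p := ht2 ▸ hdz.fst.sub hdzbar.fst
  have comm1 := pdx_pdt_comm (hf.mono fun q hq => hq.fst) dx1 dt1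
  have comm2 := pdx_pdt_comm (hf.mono fun q hq => hq.snd) dx2 dt2
  simp only [dz, dzbar, pdx_div_const, pdt_div_const, pdx_add dx1 dt2, pdx_add dx2 dt1,
    pdt_add dx1 dt2, pdt_add dx2 dt1, pdx_sub dx1 dt2, pdx_sub dx2 dt1, pdt_sub dx1 dt2,
    pdt_sub dx2 dt1, comm1, comm2, Prod.mk.injEq]
  constructor <;> ring

end HypCalculus

lemma ContDiffOn.differentiableAt_dz {f : Hyp → Hyp} {s : Set Hyp} {p : Hyp} (hs : IsOpen s)
    (hp : p ∈ s) (h : ContDiffOn ℝ 2 f s) : DifferentiableAt ℝ (dz f) p := by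
  have h1 : ContDiffOn ℝ 2 (fun q => (f q).1) s := contDiff_fst.comp_contDiffOn h
  have h2 : ContDiffOn ℝ 2 (fun q => (f q).2) s := contDiff_snd.comp_contDiffOn h
  have := h1.differentiableAt_pdx hs hp
  have := h1.differentiableAt_pdt hs hp
  have := h2.differentiableAt_pdx hs hp
  have := h2.differentiableAt_pdt hs hp
  unfold dz
  fun_prop

lemma ContDiffOn.differentiableAt_dzbar {f : Hyp → Hyp} {s : Set Hyp} {p : Hyp} (hs : IsOpen s)
    (hp : p ∈ s) (h : ContDiffOn ℝ 2 f s) : DifferentiableAt ℝ (dzbar f) p := by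
  have h1 : ContDiffOn ℝ 2 (fun q => (f q).1) s := contDiff_fst.comp_contDiffOn h
  have h2 : ContDiffOn ℝ 2 (fun q => (f q).2) s := contDiff_snd.comp_contDiffOn h
  have := h1.differentiableAt_pdx hs hp
  have := h1.differentiableAt_pdt hs hp
  have := h2.differentiableAt_pdx hs hp
  have := h2.differentiableAt_pdt hs hp
  unfold dzbar
  fun_prop

def pseudoDeriv (A B w : Hyp → Hyp) (z : Hyp) : Hyp :=
  dz w z - hmul (A z) (w z) - hmul (B z) (hconj (w z))

/- `compatFst` and `compatSnd` are the coefficients of `f` and `f̄` in `(f_z̄)_z - (f_z)_z̄` for a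
function with `f_z̄ = a f + b f̄` and `f_z = A f + B f̄`. -/
def compatFst (a b A B : Hyp → Hyp) (z : Hyp) : Hyp :=
  dz a z - dzbar A z + hmul (b z) (hconj (b z)) - hmul (B z) (hconj (B z))

def compatSnd (a b A B : Hyp → Hyp) (z : Hyp) : Hyp :=
  dz b z - dzbar B z + hmul (b z) (hconj (a z)) + hmul (a z) (B z) - hmul (A z) (b z)
    - hmul (B z) (hconj (A z))

theorem dzbar_pseudoDeriv {a b A B w : Hyp → Hyp} {z : Hyp}
    (hw : ∀ᶠ q in 𝓝 z, DifferentiableAt ℝ w q)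
    (hvekua : dzbar w =ᶠ[𝓝 z] fun q => hmul (a q) (w q) + hmul (b q) (hconj (w q)))
    (ha : DifferentiableAt ℝ a z) (hb : DifferentiableAt ℝ b z)
    (hA : DifferentiableAt ℝ A z) (hB : DifferentiableAt ℝ B z)
    (hdz : DifferentiableAt ℝ (dz w) z) :
    dzbar (pseudoDeriv A B w) z
      = hmul (a z) (pseudoDeriv A B w z) + hmul (-B z) (hconj (pseudoDeriv A B w z))
        + hmul (compatFst a b A B z) (w z) + hmul (compatSnd a b A B z) (hconj (w z)) := by
  have hwz : DifferentiableAt ℝ w z := hw.self_of_nhds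
  have hdzbar : DifferentiableAt ℝ (dzbar w) z :=
    hvekua.differentiableAt_iff.mpr ((ha.hmul hwz).add (hb.hmul hwz.hconj))
  have hW : dzbar (pseudoDeriv A B w) z = dz (dzbar w) z
      - (hmul (dzbar A z) (w z) + hmul (A z) (dzbar w z))
      - (hmul (dzbar B z) (hconj (w z)) + hmul (B z) (hconj (dz w z))) := by
    unfold pseudoDeriv
    rw [dzbar_sub (hdz.fun_sub (hA.hmul hwz)) (hB.hmul hwz.hconj),
      dzbar_sub hdz (hA.hmul hwz), dzbar_dz_comm hw hdz hdzbar, dzbar_hmul hA hwz,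
      dzbar_hmul hB hwz.hconj, dzbar_hconj]
  have hdz_dzbar : dz (dzbar w) z = hmul (dz a z) (w z) + hmul (a z) (dz w z)
      + (hmul (dz b z) (hconj (w z)) + hmul (b z) (hconj (dzbar w z))) := by
    rw [dz_congr hvekua, dz_add (ha.hmul hwz) (hb.hmul hwz.hconj), dz_hmul ha hwz,
      dz_hmul hb hwz.hconj, dz_hconj]
  rw [hW, hdz_dzbar, hvekua.self_of_nhds]
  ext <;> simp only [pseudoDeriv, compatFst, compatSnd, hmul, hconj, Prod.fst_add, Prod.snd_add,
    Prod.fst_sub, Prod.snd_sub, Prod.fst_neg, Prod.snd_neg] <;> ring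

theorem hmul_compatFst_add_hmul_compatSnd_eq_zero {a b A B f : Hyp → Hyp} {z : Hyp}
    (hf : ∀ᶠ q in 𝓝 z, DifferentiableAt ℝ f q)
    (hdzbar : dzbar f =ᶠ[𝓝 z] fun q => hmul (a q) (f q) + hmul (b q) (hconj (f q)))
    (hdz : dz f =ᶠ[𝓝 z] fun q => hmul (A q) (f q) + hmul (B q) (hconj (f q)))
    (ha : DifferentiableAt ℝ a z) (hb : DifferentiableAt ℝ b z)
    (hA : DifferentiableAt ℝ A z) (hB : DifferentiableAt ℝ B z) :
    hmul (compatFst a b A B z) (f z) + hmul (compatSnd a b A B z) (hconj (f z)) = 0 := by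
  have hfz : DifferentiableAt ℝ f z := hf.self_of_nhds
  have hdz_diff : DifferentiableAt ℝ (dz f) z :=
    hdz.differentiableAt_iff.mpr ((hA.hmul hfz).add (hB.hmul hfz.hconj))
  have hzero : pseudoDeriv A B f =ᶠ[𝓝 z] 0 := by
    filter_upwards [hdz] with q hq
    rw [pseudoDeriv, hq, Pi.zero_apply]
    abel
  have key := dzbar_pseudoDeriv hf hdzbar ha hb hA hB hdz_diff
  rw [dzbar_congr hzero, hzero.self_of_nhds] at key
  simpa [dzbar, pdx, pdt, hmul, hconj] using key.symm

section GeneratingPair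

variable {F G : Hyp → Hyp} {Ω : Set Hyp} {z : Hyp}

lemma IsGenPair.dzbar_fst (hFG : IsGenPair F G Ω) (hz : z ∈ Ω) :
    dzbar F z = hmul (aFG F G z) (F z) + hmul (bFG F G z) (hconj (F z)) :=
  (cramer_fst _ _ (hFG.2.2 z hz)).symm

lemma IsGenPair.dzbar_snd (hFG : IsGenPair F G Ω) (hz : z ∈ Ω) :
    dzbar G z = hmul (aFG F G z) (G z) + hmul (bFG F G z) (hconj (G z)) :=
  (cramer_snd _ _ (hFG.2.2 z hz)).symm

lemma IsGenPair.dz_fst (hFG : IsGenPair F G Ω) (hz : z ∈ Ω) :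
    dz F z = hmul (AFG F G z) (F z) + hmul (BFG F G z) (hconj (F z)) :=
  (cramer_fst _ _ (hFG.2.2 z hz)).symm

lemma IsGenPair.dz_snd (hFG : IsGenPair F G Ω) (hz : z ∈ Ω) :
    dz G z = hmul (AFG F G z) (G z) + hmul (BFG F G z) (hconj (G z)) :=
  (cramer_snd _ _ (hFG.2.2 z hz)).symm

lemma IsGenPair.differentiableAt_coeffs (hFG : IsGenPair F G Ω) (hΩ : IsOpen Ω) (hz : z ∈ Ω) :
    DifferentiableAt ℝ (aFG F G) z ∧ DifferentiableAt ℝ (bFG F G) z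
      ∧ DifferentiableAt ℝ (AFG F G) z ∧ DifferentiableAt ℝ (BFG F G) z := by
  have hF := (hFG.1.contDiffAt (hΩ.mem_nhds hz)).differentiableAt two_ne_zero
  have hG := (hFG.2.1.contDiffAt (hΩ.mem_nhds hz)).differentiableAt two_ne_zero
  have hdzF := hFG.1.differentiableAt_dz hΩ hz
  have hdzG := hFG.2.1.differentiableAt_dz hΩ hz
  have hdzbarF := hFG.1.differentiableAt_dzbar hΩ hz
  have hdzbarG := hFG.2.1.differentiableAt_dzbar hΩ hz
  have hquot {N : Hyp → Hyp} (hN : DifferentiableAt ℝ N z) :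
      DifferentiableAt ℝ (fun q => hdiv (N q) (pairDenom F G q)) z :=
    hN.hmul (((hF.hmul hG.hconj).sub (hF.hconj.hmul hG)).hinv (isInv_pairDenom (hFG.2.2 z hz)))
  exact ⟨(hquot ((hF.hconj.hmul hdzbarG).sub (hdzbarF.hmul hG.hconj))).neg,
    hquot ((hF.hmul hdzbarG).sub (hdzbarF.hmul hG)),
    (hquot ((hF.hconj.hmul hdzG).sub (hdzF.hmul hG.hconj))).neg,
    hquot ((hF.hmul hdzG).sub (hdzF.hmul hG))⟩

theorem IsGenPair.compat_eq_zero (hFG : IsGenPair F G Ω) (hΩ : IsOpen Ω) (hz : z ∈ Ω) :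
    compatFst (aFG F G) (bFG F G) (AFG F G) (BFG F G) z = 0
      ∧ compatSnd (aFG F G) (bFG F G) (AFG F G) (BFG F G) z = 0 := by
  obtain ⟨ha, hb, hA, hB⟩ := hFG.differentiableAt_coeffs hΩ hz
  have hΩz : ∀ᶠ q in 𝓝 z, q ∈ Ω := hΩ.mem_nhds hz
  exact eq_zero_of_hmul_add_hmul_hconj_eq_zero (hFG.2.2 z hz)
    (hmul_compatFst_add_hmul_compatSnd_eq_zero
      ((hFG.1.differentiableOn two_ne_zero).eventually_differentiableAt (hΩ.mem_nhds hz))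
      (hΩz.mono fun _ => hFG.dzbar_fst) (hΩz.mono fun _ => hFG.dz_fst) ha hb hA hB)
    (hmul_compatFst_add_hmul_compatSnd_eq_zero
      ((hFG.2.1.differentiableOn two_ne_zero).eventually_differentiableAt (hΩ.mem_nhds hz))
      (hΩz.mono fun _ => hFG.dzbar_snd) (hΩz.mono fun _ => hFG.dz_snd) ha hb hA hB)

end GeneratingPair

theorem FG_derivative_pseudoanalytic_successor_general (Ω : Set Hyp) (hΩ : IsOpen Ω)
    (F G F₁ G₁ : Hyp → Hyp)
    (hFG : IsGenPair F G Ω)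
    (hsucc_a : ∀ z ∈ Ω, aFG F₁ G₁ z = aFG F G z)
    (hsucc_b : ∀ z ∈ Ω, bFG F₁ G₁ z = - BFG F G z)
    (w : Hyp → Hyp) (hw : ContDiffOn ℝ 1 w Ω)
    (hVekua : ∀ z ∈ Ω, dzbar w z = hmul (aFG F G z) (w z) + hmul (bFG F G z) (hconj (w z)))
    (W : Hyp → Hyp)
    (hWdef : ∀ z, W z = dz w z - hmul (AFG F G z) (w z) - hmul (BFG F G z) (hconj (w z)))
    (hW : ContDiffOn ℝ 1 W Ω) :
    ∀ z ∈ Ω, dzbar W z = hmul (aFG F₁ G₁ z) (W z) + hmul (bFG F₁ G₁ z) (hconj (W z)) := by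
  intro z hz
  obtain ⟨ha, hb, hA, hB⟩ := hFG.differentiableAt_coeffs hΩ hz
  obtain ⟨hα, hβ⟩ := hFG.compat_eq_zero hΩ hz
  have hw_near : ∀ᶠ q in 𝓝 z, DifferentiableAt ℝ w q :=
    (hw.differentiableOn one_ne_zero).eventually_differentiableAt (hΩ.mem_nhds hz)
  have hwz : DifferentiableAt ℝ w z := hw_near.self_of_nhds
  have hdzw : DifferentiableAt ℝ (dz w) z := by
    have hdz_eq :
        dz w = fun q => W q + hmul (AFG F G q) (w q) + hmul (BFG F G q) (hconj (w q)) := by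
      funext q; rw [hWdef]; abel
    rw [hdz_eq]
    exact (((hW.differentiableOn one_ne_zero).differentiableAt (hΩ.mem_nhds hz)).add
      (hA.hmul hwz)).add (hB.hmul hwz.hconj)
  have hWeq : W = pseudoDeriv (AFG F G) (BFG F G) w := funext hWdef
  rw [hsucc_a z hz, hsucc_b z hz, hWeq, dzbar_pseudoDeriv hw_near
    (eventually_of_mem (hΩ.mem_nhds hz) hVekua) ha hb hA hB hdzw, hα, hβ]
  simp [hmul]

/-- if `(F₁,G₁)` is a successor of `(F,G)` and `w ∈ C¹(Ω)` is hyperbolic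
`(F,G)`-pseudoanalytic with `(F,G)`-derivative `W = w_z − A_(F,G)w − B_(F,G)w̄ ∈ C¹(Ω)`,
then `W` is hyperbolic `(F₁,G₁)`-pseudoanalytic. -/
theorem FG_derivative_pseudoanalytic_successor (Ω : Set Hyp) (hΩ : IsOpen Ω)
    (F G F₁ G₁ : Hyp → Hyp)
    (hFG : IsGenPair F G Ω) (hFG₁ : IsGenPair F₁ G₁ Ω)
    (hsucc_a : ∀ z ∈ Ω, aFG F₁ G₁ z = aFG F G z)
    (hsucc_b : ∀ z ∈ Ω, bFG F₁ G₁ z = - BFG F G z)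
    (w : Hyp → Hyp) (hw : ContDiffOn ℝ 1 w Ω)
    (hVekua : ∀ z ∈ Ω, dzbar w z = hmul (aFG F G z) (w z) + hmul (bFG F G z) (hconj (w z)))
    (W : Hyp → Hyp)
    (hWdef : ∀ z, W z = dz w z - hmul (AFG F G z) (w z) - hmul (BFG F G z) (hconj (w z)))
    (hW : ContDiffOn ℝ 1 W Ω) :
    ∀ z ∈ Ω, dzbar W z = hmul (aFG F₁ G₁ z) (W z) + hmul (bFG F₁ G₁ z) (hconj (W z)) :=
  FG_derivative_pseudoanalytic_successor_general Ω hΩ F G F₁ G₁ hFG hsucc_a hsucc_b w hw hVekua W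
    hWdef hW
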